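/- arXiv:math/9905185 — 6 statements merged into one kernel-verified Lean document; each statement's English description precedes it below -/
import Mathlib

section
/- Let X and Y be topological spaces, let S: X → X and T: Y → Y be surjective local homeomorphisms, and let (φ,ψ) be a strong shift equivalence of lag k ∈ ℕ from (X,S) to (Y,T). Then φ and ψ are surjective local homeomorphisms. -/
lemma isLocalHomeomorph_iterate {X : Type*} [TopologicalSpace X] {f : X → X}
    (hf : IsLocalHomeomorph f) : ∀ n : ℕ, IsLocalHomeomorph f^[n]
  | 0 => by simpa using (Homeomorph.refl X).isLocalHomeomorph
  | n + 1 => by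
      rw [Function.iterate_succ]
      exact (isLocalHomeomorph_iterate hf n).comp hf

lemma isLocalHomeomorph_of_open_locInj {X Y : Type*} [TopologicalSpace X] [TopologicalSpace Y]
    {f : X → Y} (hc : Continuous f) (ho : IsOpenMap f) (hi : IsLocallyInjective f) :
    IsLocalHomeomorph f := by
  rw [isLocalHomeomorph_iff_isOpenEmbedding_restrict]
  intro x
  obtain ⟨U, hU, hxU, hinj⟩ := hi x
  refine ⟨U, hU.mem_nhds hxU, ?_⟩
  exact Topology.IsOpenEmbedding.of_continuous_injective_isOpenMap
    (hc.comp continuous_subtype_val)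
    (fun a b hab => Subtype.ext (hinj a.2 b.2 hab))
    (ho.restrict hU)

/-- Key openness lemma: if `g ∘ f = h` with `h` an open map, `g` continuous and
locally injective, and `f` continuous, then `f` is an open map. -/
lemma isOpenMap_of_section {X Y : Type*} [TopologicalSpace X] [TopologicalSpace Y]
    {f : X → Y} {g : Y → X} {h : X → X}
    (hfc : Continuous f) (hgc : Continuous g) (hgi : IsLocallyInjective g)
    (hho : IsOpenMap h) (hgf : ∀ x, g (f x) = h x) : IsOpenMap f := by
  intro U hU
  rw [isOpen_iff_forall_mem_open]
  rintro y ⟨x, hxU, rfl⟩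
  obtain ⟨W, hW, hyW, hWinj⟩ := hgi (f x)
  set U' : Set X := U ∩ f ⁻¹' W with hU'def
  have hU'open : IsOpen U' := hU.inter (hW.preimage hfc)
  have hxU' : x ∈ U' := ⟨hxU, hyW⟩
  refine ⟨W ∩ g ⁻¹' (h '' U'), ?_, ?_, ?_⟩
  · rintro z ⟨hzW, w, hwU', hw⟩
    have : g z = g (f w) := by rw [hgf w, hw]
    have hz : z = f w := hWinj hzW hwU'.2 this
    exact ⟨w, hwU'.1, hz.symm⟩
  · exact hW.inter ((hho U' hU'open).preimage hgc)
  · exact ⟨hyW, x, hxU', (hgf x).symm⟩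

/-- Let `X` and `Y` be topological spaces, `S : X → X` and `T : Y → Y`
surjective local homeomorphisms, and `(φ, ψ)` a strong shift equivalence of lag `k`
from `(X, S)` to `(Y, T)` (i.e. `φ, ψ` are continuous, `T ∘ φ = φ ∘ S`, `ψ ∘ T = S ∘ ψ`,
`ψ ∘ φ = S^[k]` and `φ ∘ ψ = T^[k]`).  Then `φ` and `ψ` are surjective local
homeomorphisms. -/
theorem strong_shift_equivalence_maps_are_surjective_local_homeomorphisms
    {X Y : Type*} [TopologicalSpace X] [TopologicalSpace Y]
    (S : X → X) (T : Y → Y)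
    (hS : IsLocalHomeomorph S) (hT : IsLocalHomeomorph T)
    (hSsurj : Function.Surjective S) (hTsurj : Function.Surjective T)
    (φ : X → Y) (ψ : Y → X) (hφ : Continuous φ) (hψ : Continuous ψ) (k : ℕ)
    (h1 : T ∘ φ = φ ∘ S) (h2 : ψ ∘ T = S ∘ ψ)
    (h3 : ψ ∘ φ = S^[k]) (h4 : φ ∘ ψ = T^[k]) :
    Function.Surjective φ ∧ Function.Surjective ψ ∧
      IsLocalHomeomorph φ ∧ IsLocalHomeomorph ψ := by
  have hSk : IsLocalHomeomorph S^[k] := isLocalHomeomorph_iterate hS k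
  have hTk : IsLocalHomeomorph T^[k] := isLocalHomeomorph_iterate hT k
  have h3' : ∀ x, ψ (φ x) = S^[k] x := fun x => congrFun h3 x
  have h4' : ∀ y, φ (ψ y) = T^[k] y := fun y => congrFun h4 y
  -- local injectivity of φ and ψ
  have hφinj : IsLocallyInjective φ := by
    intro x
    obtain ⟨U, hU, hxU, hinj⟩ := hSk.isLocallyInjective x
    exact ⟨U, hU, hxU, fun a ha b hb hab => hinj ha hb (by rw [← h3', ← h3', hab])⟩
  have hψinj : IsLocallyInjective ψ := by
    intro y
    obtain ⟨U, hU, hyU, hinj⟩ := hTk.isLocallyInjective y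
    exact ⟨U, hU, hyU, fun a ha b hb hab => hinj ha hb (by rw [← h4', ← h4', hab])⟩
  -- surjectivity
  have hφsurj : Function.Surjective φ := fun y => by
    obtain ⟨z, hz⟩ := hTsurj.iterate k y
    exact ⟨ψ z, by rw [h4', hz]⟩
  have hψsurj : Function.Surjective ψ := fun x => by
    obtain ⟨z, hz⟩ := hSsurj.iterate k x
    exact ⟨φ z, by rw [h3', hz]⟩
  -- openness
  have hφopen : IsOpenMap φ := isOpenMap_of_section hφ hψ hψinj hSk.isOpenMap h3'
  have hψopen : IsOpenMap ψ := isOpenMap_of_section hψ hφ hφinj hTk.isOpenMap h4'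
  exact ⟨hφsurj, hψsurj,
    isLocalHomeomorph_of_open_locInj hφ hφopen hφinj,
    isLocalHomeomorph_of_open_locInj hψ hψopen hψinj⟩
end

section
/- Let X and Y be topological spaces, S: X → X and T: Y → Y surjective local homeomorphisms, and (φ,ψ) a strong shift equivalence of lag k ∈ ℕ from (X,S) to (Y,T). Define φ̃: X̃ → Ỹ and ψ̃: Ỹ → X̃ coordinatewise by φ̃((x_i)_i) = (φ(x_i))_i and ψ̃((y_i)_i) = (ψ(y_i))_i. Then φ̃ and ψ̃ are well defined and are homeomorphisms satisfying T̃∘φ̃ = φ̃∘S̃, S̃∘ψ̃ = ψ̃∘T̃, ψ̃∘φ̃ = S̃^k and φ̃∘ψ̃ = T̃^k. In particular, the invertible extensions (X̃,S̃) and (Ỹ,T̃) are topologically conjugate. -/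
/-- The invertible extension (projective limit) of a dynamical system `(X, S)`:
the space of backward `S`-orbits. -/
abbrev InvExt {X : Type*} (S : X → X) : Type _ :=
  {x : ℕ → X // ∀ i, S (x (i + 1)) = x i}

/-- The map induced by `S` on its invertible extension, acting coordinatewise. -/
def invExtMap {X : Type*} (S : X → X) : InvExt S → InvExt S :=
  fun x => ⟨fun i => S (x.1 i), fun i => congrArg S (x.2 i)⟩

/-- The one-step shift on the invertible extension. -/
def invExtShift {X : Type*} (S : X → X) : InvExt S → InvExt S :=
  fun x => ⟨fun i => x.1 (i + 1), fun i => x.2 (i + 1)⟩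

lemma invExtShift_leftInv {X : Type*} (S : X → X) :
    Function.LeftInverse (invExtShift S) (invExtMap S) := by
  intro x; exact Subtype.ext (funext fun i => x.2 i)

lemma invExtShift_rightInv {X : Type*} (S : X → X) :
    Function.RightInverse (invExtShift S) (invExtMap S) := by
  intro x; exact Subtype.ext (funext fun i => x.2 i)

/-- A map semiconjugating `S` and `T` induces a coordinatewise map on extensions. -/
def coordMap {X Y : Type*} (S : X → X) (T : Y → Y) (φ : X → Y)
    (h : ∀ x, T (φ x) = φ (S x)) : InvExt S → InvExt T :=
  fun x => ⟨fun i => φ (x.1 i), fun i => by rw [h]; exact congrArg φ (x.2 i)⟩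

lemma continuous_coordMap {X Y : Type*} [TopologicalSpace X] [TopologicalSpace Y]
    (S : X → X) (T : Y → Y) (φ : X → Y) (h : ∀ x, T (φ x) = φ (S x))
    (hφ : Continuous φ) : Continuous (coordMap S T φ h) :=
  Continuous.subtype_mk
    (continuous_pi fun i => hφ.comp ((continuous_apply i).comp continuous_subtype_val)) _

lemma continuous_invExtShift {X : Type*} [TopologicalSpace X] (S : X → X) :
    Continuous (invExtShift S) := by
  have : Continuous fun x : InvExt S => fun i => x.1 (i + 1) :=
    continuous_pi fun i => (continuous_apply (i + 1)).comp continuous_subtype_val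
  exact Continuous.subtype_mk this _

lemma invExtMap_iter_apply {X : Type*} (S : X → X) (k : ℕ) (x : InvExt S) (i : ℕ) :
    ((invExtMap S)^[k] x).1 i = S^[k] (x.1 i) := by
  induction k with
  | zero => rfl
  | succ n ih =>
    rw [Function.iterate_succ_apply', Function.iterate_succ_apply']
    exact congrArg S ih

/-- Let `(φ, ψ)` be a strong shift equivalence of lag `k` between
`(X, S)` and `(Y, T)` (surjective local homeomorphisms).  Then the coordinatewise maps
`φ̃ : X̃ → Ỹ` and `ψ̃ : Ỹ → X̃` are well defined, are homeomorphisms, and satisfy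
`T̃ ∘ φ̃ = φ̃ ∘ S̃`, `S̃ ∘ ψ̃ = ψ̃ ∘ T̃`, `ψ̃ ∘ φ̃ = S̃^[k]`, `φ̃ ∘ ψ̃ = T̃^[k]`.
In particular the invertible extensions `(X̃, S̃)` and `(Ỹ, T̃)` are topologically
conjugate. -/
theorem strong_shift_equivalence_conjugates_invertible_extensions
    {X Y : Type*} [TopologicalSpace X] [TopologicalSpace Y]
    (S : X → X) (T : Y → Y)
    (hS : IsLocalHomeomorph S) (hT : IsLocalHomeomorph T)
    (hSsurj : Function.Surjective S) (hTsurj : Function.Surjective T)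
    (φ : X → Y) (ψ : Y → X) (hφ : Continuous φ) (hψ : Continuous ψ) (k : ℕ)
    (h1 : T ∘ φ = φ ∘ S) (h2 : ψ ∘ T = S ∘ ψ)
    (h3 : ψ ∘ φ = S^[k]) (h4 : φ ∘ ψ = T^[k]) :
    ∃ (Φ : InvExt S ≃ₜ InvExt T) (Ψ : InvExt T ≃ₜ InvExt S),
      (∀ x i, (Φ x).1 i = φ (x.1 i)) ∧
      (∀ y i, (Ψ y).1 i = ψ (y.1 i)) ∧
      invExtMap T ∘ ⇑Φ = ⇑Φ ∘ invExtMap S ∧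
      invExtMap S ∘ ⇑Ψ = ⇑Ψ ∘ invExtMap T ∧
      ⇑Ψ ∘ ⇑Φ = (invExtMap S)^[k] ∧
      ⇑Φ ∘ ⇑Ψ = (invExtMap T)^[k] := by
  have h1' : ∀ x, T (φ x) = φ (S x) := fun x => congrFun h1 x
  have h2' : ∀ y, S (ψ y) = ψ (T y) := fun y => (congrFun h2 y).symm
  set φt : InvExt S → InvExt T := coordMap S T φ h1' with hφt
  set ψt : InvExt T → InvExt S := coordMap T S ψ h2' with hψt
  -- the key algebraic identities
  have key1 : ∀ x : InvExt S, ψt (φt x) = (invExtMap S)^[k] x := by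
    intro x
    refine Subtype.ext (funext fun i => ?_)
    have : ψ (φ (x.1 i)) = S^[k] (x.1 i) := congrFun h3 (x.1 i)
    rw [invExtMap_iter_apply]
    exact this
  have key2 : ∀ y : InvExt T, φt (ψt y) = (invExtMap T)^[k] y := by
    intro y
    refine Subtype.ext (funext fun i => ?_)
    have : φ (ψ (y.1 i)) = T^[k] (y.1 i) := congrFun h4 (y.1 i)
    rw [invExtMap_iter_apply]
    exact this
  -- φt semiconjugates the shifts
  have semiφ : Function.Semiconj φt (invExtShift S) (invExtShift T) := by
    intro x; exact Subtype.ext rfl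
  have semiψ : Function.Semiconj ψt (invExtShift T) (invExtShift S) := by
    intro y; exact Subtype.ext rfl
  have shiftS_iter : ∀ x : InvExt S, (invExtShift S)^[k] ((invExtMap S)^[k] x) = x :=
    (invExtShift_leftInv S).iterate k
  have shiftT_iter : ∀ y : InvExt T, (invExtShift T)^[k] ((invExtMap T)^[k] y) = y :=
    (invExtShift_leftInv T).iterate k
  refine ⟨⟨⟨φt, (invExtShift S)^[k] ∘ ψt, ?_, ?_⟩,
      continuous_coordMap S T φ h1' hφ,
      (((continuous_invExtShift S).iterate k).comp (continuous_coordMap T S ψ h2' hψ))⟩,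
    ⟨⟨ψt, (invExtShift T)^[k] ∘ φt, ?_, ?_⟩,
      continuous_coordMap T S ψ h2' hψ,
      (((continuous_invExtShift T).iterate k).comp (continuous_coordMap S T φ h1' hφ))⟩,
    fun x i => rfl, fun y i => rfl, ?_, ?_, ?_, ?_⟩
  · intro x
    simp only [Function.comp_apply, key1]
    exact shiftS_iter x
  · intro y
    simp only [Function.comp_apply]
    rw [(semiφ.iterate_right k) (ψt y), key2]
    exact shiftT_iter y
  · intro y
    simp only [Function.comp_apply, key2]
    exact shiftT_iter y
  · intro x
    simp only [Function.comp_apply]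
    rw [(semiψ.iterate_right k) (φt x), key1]
    exact shiftS_iter x
  · funext x
    exact Subtype.ext (funext fun i => (h1' (x.1 i)))
  · funext y
    exact Subtype.ext (funext fun i => (h2' (y.1 i)))
  · funext x
    exact key1 x
  · funext y
    exact key2 y
end

section
/- Let A and B be square matrices with nonnegative integer entries, indexed by finite sets I_A and I_B respectively, which admit an elementary equivalence: A = RS and B = SR for some nonnegative integer matrices R (indexed by I_A × I_B) and S (indexed by I_B × I_A). Then there exist continuous maps φ: X_A → X_B and ψ: X_B → X_A such that T_B∘φ = φ∘T_A, T_A∘ψ = ψ∘T_B, ψ∘φ = T_A and φ∘ψ = T_B; i.e. (φ,ψ) is a strong shift equivalence of lag 1 between the one-sided edge shifts (X_A,T_A) and (X_B,T_B). -/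
/-- The edge set of the directed graph whose adjacency matrix is `A` : there are
exactly `A i j` edges from vertex `i` to vertex `j`. -/
def EdgeSet {ι : Type*} (A : ι → ι → ℕ) : Type _ := (i : ι) × (j : ι) × Fin (A i j)

/-- The edge set carries the discrete topology. -/
instance {ι : Type*} (A : ι → ι → ℕ) : TopologicalSpace (EdgeSet A) := ⊥

instance {ι : Type*} (A : ι → ι → ℕ) : DiscreteTopology (EdgeSet A) := ⟨rfl⟩

/-- The source vertex of an edge. -/
def EdgeSet.src {ι : Type*} {A : ι → ι → ℕ} (e : EdgeSet A) : ι := e.1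

/-- The range vertex of an edge. -/
def EdgeSet.rng {ι : Type*} {A : ι → ι → ℕ} (e : EdgeSet A) : ι := e.2.1

/-- The one-sided edge shift space of the matrix `A`: one-sided infinite paths of
composable edges, with the product topology. -/
abbrev EdgeShiftSpace {ι : Type*} (A : ι → ι → ℕ) : Type _ :=
  {e : ℕ → EdgeSet A // ∀ n, (e n).rng = (e (n + 1)).src}

/-- The one-sided shift on the edge shift space. -/
def edgeShift {ι : Type*} (A : ι → ι → ℕ) : EdgeShiftSpace A → EdgeShiftSpace A :=
  fun e => ⟨fun n => e.1 (n + 1), fun n => e.2 (n + 1)⟩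


section SSEAux
variable {ιA ιB : Type*}
variable {A : ιA → ιA → ℕ} {B : ιB → ιB → ℕ} {R : ιA → ιB → ℕ} {S : ιB → ιA → ℕ}

/-- Given decompositions of the edges of `A` (into `R`-`S` pairs) and of `B`
(into `S`-`R` pairs), a composable pair of `A`-edges yields a `B`-edge. -/
def phiEdge (dA : ∀ i j, Fin (A i j) ≃ Σ k : ιB, Fin (R i k) × Fin (S k j))
    (dB : ∀ k k', Fin (B k k') ≃ Σ i : ιA, Fin (S k i) × Fin (R i k'))
    (e e' : EdgeSet A) (h : e.rng = e'.src) : EdgeSet B :=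
  ⟨(dA e.1 e.2.1 e.2.2).1, (dA e'.1 e'.2.1 e'.2.2).1,
    (dB _ _).symm ⟨e.2.1, (dA e.1 e.2.1 e.2.2).2.2,
      Fin.cast (by rw [show e.2.1 = e'.1 from h]) (dA e'.1 e'.2.1 e'.2.2).2.1⟩⟩

/-- A composable pair of `B`-edges yields an `A`-edge. -/
def psiEdge (dA : ∀ i j, Fin (A i j) ≃ Σ k : ιB, Fin (R i k) × Fin (S k j))
    (dB : ∀ k k', Fin (B k k') ≃ Σ i : ιA, Fin (S k i) × Fin (R i k'))
    (f f' : EdgeSet B) (h : f.rng = f'.src) : EdgeSet A :=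
  ⟨(dB f.1 f.2.1 f.2.2).1, (dB f'.1 f'.2.1 f'.2.2).1,
    (dA _ _).symm ⟨f.2.1, (dB f.1 f.2.1 f.2.2).2.2,
      Fin.cast (by rw [show f.2.1 = f'.1 from h]) (dB f'.1 f'.2.1 f'.2.2).2.1⟩⟩

variable (dA : ∀ i j, Fin (A i j) ≃ Σ k : ιB, Fin (R i k) × Fin (S k j))
variable (dB : ∀ k k', Fin (B k k') ≃ Σ i : ιA, Fin (S k i) × Fin (R i k'))

lemma psi_phi (e e' e'' : EdgeSet A) (h : e.rng = e'.src) (h' : e'.rng = e''.src) :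
    psiEdge dA dB (phiEdge dA dB e e' h) (phiEdge dA dB e' e'' h') rfl = e' := by
  obtain ⟨i, j, a⟩ := e
  obtain ⟨i', j', a'⟩ := e'
  obtain ⟨i'', j'', a''⟩ := e''
  dsimp [EdgeSet.rng, EdgeSet.src] at h h'
  subst h h'
  simp only [psiEdge, phiEdge]
  simp only [Fin.cast_eq_self]
  erw [Equiv.apply_symm_apply, Equiv.apply_symm_apply]
  simp
  rfl

lemma phi_psi (f f' f'' : EdgeSet B) (h : f.rng = f'.src) (h' : f'.rng = f''.src) :
    phiEdge dA dB (psiEdge dA dB f f' h) (psiEdge dA dB f' f'' h') rfl = f' := by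
  obtain ⟨i, j, a⟩ := f
  obtain ⟨i', j', a'⟩ := f'
  obtain ⟨i'', j'', a''⟩ := f''
  dsimp [EdgeSet.rng, EdgeSet.src] at h h'
  subst h h'
  simp only [psiEdge, phiEdge]
  simp only [Fin.cast_eq_self]
  erw [Equiv.apply_symm_apply, Equiv.apply_symm_apply]
  simp
  rfl

end SSEAux

/-- Let `A` and `B` be square matrices with nonnegative integer
entries, indexed by finite sets, admitting an elementary equivalence `A = R S`,
`B = S R`.  Then there is a strong shift equivalence of lag 1 between the one-sided
edge shifts `(X_A, T_A)` and `(X_B, T_B)`: continuous maps `φ : X_A → X_B` and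
`ψ : X_B → X_A` with `T_B ∘ φ = φ ∘ T_A`, `T_A ∘ ψ = ψ ∘ T_B`, `ψ ∘ φ = T_A` and
`φ ∘ ψ = T_B`. -/
theorem elementary_equivalence_gives_strong_shift_equivalence
    {ιA ιB : Type*} [Fintype ιA] [Fintype ιB]
    (A : ιA → ιA → ℕ) (B : ιB → ιB → ℕ) (R : ιA → ιB → ℕ) (S : ιB → ιA → ℕ)
    (hA : ∀ i j, A i j = ∑ k : ιB, R i k * S k j)
    (hB : ∀ i j, B i j = ∑ k : ιA, S i k * R k j) :
    ∃ (φ : EdgeShiftSpace A → EdgeShiftSpace B) (ψ : EdgeShiftSpace B → EdgeShiftSpace A),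
      Continuous φ ∧ Continuous ψ ∧
      edgeShift B ∘ φ = φ ∘ edgeShift A ∧
      edgeShift A ∘ ψ = ψ ∘ edgeShift B ∧
      ψ ∘ φ = edgeShift A ∧ φ ∘ ψ = edgeShift B := by
  classical
  have cardA : ∀ i j, Fintype.card (Fin (A i j))
      = Fintype.card (Σ k : ιB, Fin (R i k) × Fin (S k j)) := by
    intro i j
    simp [hA i j, Fintype.card_sigma]
  have cardB : ∀ k k', Fintype.card (Fin (B k k'))
      = Fintype.card (Σ i : ιA, Fin (S k i) × Fin (R i k')) := by
    intro k k'
    simp [hB k k', Fintype.card_sigma]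
  let dA : ∀ i j, Fin (A i j) ≃ Σ k : ιB, Fin (R i k) × Fin (S k j) :=
    fun i j => Fintype.equivOfCardEq (cardA i j)
  let dB : ∀ k k', Fin (B k k') ≃ Σ i : ιA, Fin (S k i) × Fin (R i k') :=
    fun k k' => Fintype.equivOfCardEq (cardB k k')
  refine ⟨fun e => ⟨fun n => phiEdge dA dB (e.1 n) (e.1 (n + 1)) (e.2 n), fun n => rfl⟩,
    fun f => ⟨fun n => psiEdge dA dB (f.1 n) (f.1 (n + 1)) (f.2 n), fun n => rfl⟩,
    ?_, ?_, ?_, ?_, ?_, ?_⟩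
  · apply Continuous.subtype_mk
    apply continuous_pi
    intro n
    have h1 : Continuous (fun e : EdgeShiftSpace A =>
        (⟨(e.1 n, e.1 (n + 1)), e.2 n⟩ :
          {p : EdgeSet A × EdgeSet A // p.1.rng = p.2.src})) :=
      Continuous.subtype_mk
        (((continuous_apply n).comp continuous_subtype_val).prodMk
          ((continuous_apply (n + 1)).comp continuous_subtype_val)) _
    exact (continuous_of_discreteTopology
      (f := fun q : {p : EdgeSet A × EdgeSet A // p.1.rng = p.2.src} =>
        phiEdge dA dB q.1.1 q.1.2 q.2)).comp h1
  · apply Continuous.subtype_mk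
    apply continuous_pi
    intro n
    have h1 : Continuous (fun f : EdgeShiftSpace B =>
        (⟨(f.1 n, f.1 (n + 1)), f.2 n⟩ :
          {p : EdgeSet B × EdgeSet B // p.1.rng = p.2.src})) :=
      Continuous.subtype_mk
        (((continuous_apply n).comp continuous_subtype_val).prodMk
          ((continuous_apply (n + 1)).comp continuous_subtype_val)) _
    exact (continuous_of_discreteTopology
      (f := fun q : {p : EdgeSet B × EdgeSet B // p.1.rng = p.2.src} =>
        psiEdge dA dB q.1.1 q.1.2 q.2)).comp h1
  · funext x
    exact Subtype.ext rfl
  · funext x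
    exact Subtype.ext rfl
  · funext x
    refine Subtype.ext (funext fun n => ?_)
    exact psi_phi dA dB (x.1 n) (x.1 (n + 1)) (x.1 (n + 2)) (x.2 n) (x.2 (n + 1))
  · funext x
    refine Subtype.ext (funext fun n => ?_)
    exact phi_psi dA dB (x.1 n) (x.1 (n + 1)) (x.1 (n + 2)) (x.2 n) (x.2 (n + 1))
end

section
/- Let I be a countable set and A ⊆ I × I such that every vertex has an outgoing edge (for every i ∈ I there is j ∈ I with (i,j) ∈ A). Then the following conditions are equivalent for the Markov shift (X_A, T_A): (i) (X_A, T_A) is essentially free; (ii) condition (L) holds: every loop has an outgoing edge; (iii) (X_A, T_A) has no isolated periodic point. -/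
/-! Infrastructure for the one-sided Markov shift `(X_{A,𝒥}, T_{A,𝒥})` associated to a
directed graph `A ⊆ I × I` on a countable vertex set `I` and a family `𝒥` of subsets
of `I`.

A *terminal path* is either an infinite path `(i₀, i₁, …)` in the graph `A`, or a pair
`(α; J)` consisting of a finite (possibly empty) path `α` and a set `J ∈ 𝒥` containing
the last vertex of `α` (when `α` is nonempty).  We encode a terminal path as a pair
`(v, J)` where `v : ℕ → Option I` lists the vertices (`none` beyond the length) and
`J : Set I` is the tail set (normalized to `∅` for infinite paths). -/

/-- `IsTP A 𝒥 (v, J)` : `(v, J)` encodes a terminal path for the graph `A` and the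
family `𝒥`. -/
def IsTP {I : Type*} (A : Set (I × I)) (𝒥 : Set (Set I))
    (p : (ℕ → Option I) × Set I) : Prop :=
  (∀ n, p.1 n = none → p.1 (n + 1) = none) ∧
  (∀ n i j, p.1 n = some i → p.1 (n + 1) = some j → (i, j) ∈ A) ∧
  ((∃ n, p.1 n = none) →
    p.2 ∈ 𝒥 ∧ ∀ n i, p.1 n = some i → p.1 (n + 1) = none → i ∈ p.2) ∧
  ((∀ n, p.1 n ≠ none) → p.2 = ∅)

/-- The space `X_{A,𝒥}` of terminal paths. -/
def TP {I : Type*} (A : Set (I × I)) (𝒥 : Set (Set I)) : Type _ :=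
  {p : (ℕ → Option I) × Set I // IsTP A 𝒥 p}

namespace TP

variable {I : Type*} {A : Set (I × I)} {𝒥 : Set (Set I)}

/-- The `n`-th vertex of a terminal path (`none` if the path is shorter). -/
def vertex (x : TP A 𝒥) (n : ℕ) : Option I := x.1.1 n

/-- The tail set of a (finite) terminal path. -/
def tail (x : TP A 𝒥) : Set I := x.1.2

/-- `x.LenGe n` : the terminal path `x` has length at least `n`; this is the domain
of the `n`-th iterate of the shift. -/
def LenGe (x : TP A 𝒥) (n : ℕ) : Prop := ∀ k < n, x.vertex k ≠ none

/-- The one-sided shift `T_{A,𝒥}`, deleting the first vertex (and fixing the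
terminal paths of length `0`). -/
def shift (x : TP A 𝒥) : TP A 𝒥 :=
  ⟨(fun n => x.1.1 (n + 1), x.1.2), by
    obtain ⟨h1, h2, h3, h4⟩ := x.2
    refine ⟨fun n hn => h1 (n + 1) hn, fun n => h2 (n + 1), fun hex => ?_, fun hall => ?_⟩
    · obtain ⟨n, hn⟩ := hex
      exact ⟨(h3 ⟨n + 1, hn⟩).1, fun m i hi hm => (h3 ⟨n + 1, hn⟩).2 (m + 1) i hi hm⟩
    · apply h4
      intro n
      cases n with
      | zero => intro h0; exact hall 0 (h1 0 h0)
      | succ m => exact hall m⟩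

/-- `λ(T^n x)` : the set of vertices which may be prepended to the `n`-times shifted
path, read off directly from `x`; for an infinite or long enough path starting (at
time `n`) with `i₀` this is `A_{i₀} = {j | (j, i₀) ∈ A}`, and for the empty path
`(∅; J)` it is `J`. -/
def lamAt (x : TP A 𝒥) (n : ℕ) : Set I :=
  {j | (∃ i, x.vertex n = some i ∧ (j, i) ∈ A) ∨ (x.vertex n = none ∧ j ∈ x.tail)}

/-- `Ũ_i` : the set of terminal paths with first vertex `i`. -/
def Uset (i : I) : Set (TP A 𝒥) := {x | x.vertex 0 = some i}

/-- `Ũ` : the set of terminal paths of length at least 1; the domain of the shift. -/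
def Udom : Set (TP A 𝒥) := {x | x.vertex 0 ≠ none}

/-- `Ṽ_i = T(Ũ_i) = {x | i ∈ λ(x)}`. -/
def Vset (i : I) : Set (TP A 𝒥) := {x | i ∈ x.lamAt 0}

/-- The generating family for the topology of `X_{A,𝒥}` : the sets
`T^{-n}(Ũ_i) = {x | vertex n of x is i}` and
`T^{-n}(Ṽ_i) = {x | length x ≥ n and i ∈ λ(T^n x)}`, together with their
complements. -/
def gens (A : Set (I × I)) (𝒥 : Set (Set I)) : Set (Set (TP A 𝒥)) :=
  {s | ∃ (n : ℕ) (i : I),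
    s = {x : TP A 𝒥 | x.vertex n = some i} ∨
    s = {x : TP A 𝒥 | x.vertex n = some i}ᶜ ∨
    s = {x : TP A 𝒥 | x.LenGe n ∧ i ∈ x.lamAt n} ∨
    s = {x : TP A 𝒥 | x.LenGe n ∧ i ∈ x.lamAt n}ᶜ}

instance : TopologicalSpace (TP A 𝒥) := TopologicalSpace.generateFrom (gens A 𝒥)

end TP

/-- `𝒥_A` : the set of cluster points at infinity of the family `(A_i)_{i ∈ I}`,
where `A_i = {j | (j, i) ∈ A}` :  `J ∈ 𝒥_A` iff for all finite sets `E ⊆ J` and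
`F ⊆ I \ J` there are infinitely many `i ∈ I` with `E ⊆ A_i` and `F ∩ A_i = ∅`. -/
def JA {I : Type*} (A : Set (I × I)) : Set (Set I) :=
  {J | ∀ E F : Finset I, ↑E ⊆ J → ↑F ⊆ Jᶜ →
    {i : I | (∀ e ∈ E, (e, i) ∈ A) ∧ (∀ f ∈ F, (f, i) ∉ A)}.Infinite}

namespace TP

variable {I : Type*} {A : Set (I × I)} {𝒥 : Set (Set I)}

lemma vertex_shift (x : TP A 𝒥) (t : ℕ) : (shift x).vertex t = x.vertex (t + 1) := rfl

lemma vertex_shift_iterate (m : ℕ) (x : TP A 𝒥) (t : ℕ) :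
    (shift^[m] x).vertex t = x.vertex (t + m) := by
  induction m generalizing x with
  | zero => rfl
  | succ m ih =>
    rw [Function.iterate_succ_apply, ih, vertex_shift]
    congr 1

lemma tail_shift_iterate (m : ℕ) (x : TP A 𝒥) : (shift^[m] x).tail = x.tail := by
  induction m generalizing x with
  | zero => rfl
  | succ m ih => rw [Function.iterate_succ_apply]; exact ih _

lemma tp_ext {x y : TP A 𝒥} (h1 : ∀ t, x.vertex t = y.vertex t) (h2 : x.tail = y.tail) :
    x = y :=
  Subtype.ext (Prod.ext (funext h1) h2)

lemma gens_local {s : Set (TP A 𝒥)} (hs : s ∈ gens A 𝒥) :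
    ∃ N, ∀ y z : TP A 𝒥, (∀ q, y.vertex q ≠ none) → (∀ q, z.vertex q ≠ none) →
      (∀ q ≤ N, y.vertex q = z.vertex q) → (y ∈ s → z ∈ s) := by
  obtain ⟨n, i, h⟩ := hs
  refine ⟨n, fun y z hy hz hagree => ?_⟩
  have hv : y.vertex n = z.vertex n := hagree n le_rfl
  have hlam : i ∈ y.lamAt n ↔ i ∈ z.lamAt n := by
    simp only [lamAt, Set.mem_setOf_eq]
    constructor
    · rintro (⟨a, ha, hA⟩ | ⟨h0, _⟩)
      · exact Or.inl ⟨a, hv ▸ ha, hA⟩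
      · exact absurd h0 (hy n)
    · rintro (⟨a, ha, hA⟩ | ⟨h0, _⟩)
      · exact Or.inl ⟨a, hv.symm ▸ ha, hA⟩
      · exact absurd h0 (hz n)
  have hleny : y.LenGe n := fun k _ => hy k
  have hlenz : z.LenGe n := fun k _ => hz k
  rcases h with h | h | h | h <;> subst h
  · intro hm
    show z.vertex n = some i
    rw [← hv]; exact hm
  · intro hm hc
    apply hm
    show y.vertex n = some i
    rw [hv]; exact hc
  · rintro ⟨_, hl⟩
    exact ⟨hlenz, hlam.mp hl⟩
  · intro hm hc
    exact hm ⟨hleny, hlam.mpr hc.2⟩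

lemma open_local {O : Set (TP A 𝒥)} (hO : IsOpen O) {x : TP A 𝒥} (hx : x ∈ O)
    (hxi : ∀ q, x.vertex q ≠ none) :
    ∃ N, ∀ z : TP A 𝒥, (∀ q, z.vertex q ≠ none) →
      (∀ q ≤ N, x.vertex q = z.vertex q) → z ∈ O := by
  classical
  have hbasis := TopologicalSpace.isTopologicalBasis_of_subbasis
    (rfl : (inferInstance : TopologicalSpace (TP A 𝒥)) = TopologicalSpace.generateFrom (gens A 𝒥))
  obtain ⟨b, hbB, hxb, hbO⟩ := hbasis.exists_subset_of_mem_open hx hO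
  obtain ⟨F, ⟨hFfin, hFsub⟩, rfl⟩ := hbB
  let Nf : Set (TP A 𝒥) → ℕ := fun s =>
    if h : s ∈ gens A 𝒥 then (gens_local h).choose else 0
  refine ⟨hFfin.toFinset.sup Nf, fun z hz hagree => hbO ?_⟩
  intro s hsF
  have hsg := hFsub hsF
  have hNle : Nf s ≤ hFfin.toFinset.sup Nf := Finset.le_sup (hFfin.mem_toFinset.mpr hsF)
  have hNfs : Nf s = (gens_local hsg).choose := dif_pos hsg
  exact (gens_local hsg).choose_spec x z hxi hz
    (fun q hq => hagree q (hq.trans (hNfs ▸ hNle))) (Set.mem_sInter.mp hxb s hsF)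

/-- An infinite path extension from a starting vertex, using `hvert`. -/
noncomputable def pathext (hvert : ∀ i : I, ∃ j, (i, j) ∈ A) (b : I) : ℕ → I
  | 0 => b
  | n + 1 => (hvert (pathext hvert b n)).choose

lemma pathext_spec (hvert : ∀ i : I, ∃ j, (i, j) ∈ A) (b : I) (n : ℕ) :
    (pathext hvert b n, pathext hvert b (n + 1)) ∈ A :=
  (hvert _).choose_spec

/-- From a loop without outgoing edges, construct an isolated periodic point. -/
lemma loop_point (p : ℕ) (j : ℕ → I) (hp : 0 < p)
    (hpath : ∀ k < p, (j k, j (k + 1)) ∈ A) (hloop : j p = j 0)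
    (hnout : ∀ k < p, ∀ b, (j k, b) ∈ A → b = j (k + 1)) :
    ∃ x : TP A (JA A), IsOpen ({x} : Set (TP A (JA A))) ∧
      (∀ t, x.vertex t = some (j (t % p))) ∧ shift^[p] x = x := by
  have hj1 : ∀ t, j ((t + 1) % p) = j (t % p + 1) := by
    intro t
    rw [← Nat.mod_add_mod]
    rcases Nat.lt_or_ge (t % p + 1) p with h | h
    · rw [Nat.mod_eq_of_lt h]
    · have hq : t % p + 1 = p := by have := Nat.mod_lt t hp; omega
      rw [hq, Nat.mod_self]
      exact hloop.symm
  have hIsTP : IsTP A (JA A) (fun t => some (j (t % p)), (∅ : Set I)) := by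
    refine ⟨fun n h => by simp at h, fun n a b ha hb => ?_, fun h => ?_, fun _ => rfl⟩
    · obtain rfl : a = j (n % p) := (Option.some.inj ha).symm
      obtain rfl : b = j ((n + 1) % p) := (Option.some.inj hb).symm
      rw [hj1]
      exact hpath _ (Nat.mod_lt _ hp)
    · obtain ⟨n, hn⟩ := h
      simp at hn
  set x : TP A (JA A) := ⟨(fun t => some (j (t % p)), ∅), hIsTP⟩ with hxdef
  have hxv : ∀ t, x.vertex t = some (j (t % p)) := fun t => rfl
  have hkey : {y : TP A (JA A) | y.vertex 0 = some (j 0)} = {x} := by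
    ext y
    simp only [Set.mem_setOf_eq, Set.mem_singleton_iff]
    constructor
    · intro h0
      have hv : ∀ t, y.vertex t = some (j (t % p)) := by
        intro t
        induction t with
        | zero => rw [h0, Nat.zero_mod]
        | succ t ih =>
          cases h : y.vertex (t + 1) with
          | none =>
            exfalso
            have h3 := y.2.2.2.1 ⟨t + 1, h⟩
            have hmem : j (t % p) ∈ y.1.2 := h3.2 t _ ih h
            have hinf := h3.1 {j (t % p)} ∅ (by simp [hmem]) (by simp)
            have hsub : {i : I | (∀ e ∈ ({j (t % p)} : Finset I), (e, i) ∈ A) ∧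
                (∀ f ∈ (∅ : Finset I), (f, i) ∉ A)} ⊆ {j (t % p + 1)} := by
              rintro i ⟨h1, -⟩
              exact hnout (t % p) (Nat.mod_lt t hp) i (h1 _ (Finset.mem_singleton_self _))
            exact (Set.finite_singleton _).not_infinite (hinf.mono hsub)
          | some i' =>
            have hedge := y.2.2.1 t _ _ ih h
            have hi' := hnout (t % p) (Nat.mod_lt t hp) i' hedge
            rw [hi', hj1]
      have htail : y.1.2 = ∅ := y.2.2.2.2 (fun t => by rw [show y.1.1 t = y.vertex t from rfl, hv t]; simp)
      exact tp_ext (fun t => (hv t).trans (hxv t).symm) htail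
    · rintro rfl
      have := hxv 0
      rwa [Nat.zero_mod] at this
  refine ⟨x, ?_, hxv, ?_⟩
  · rw [← hkey]
    exact TopologicalSpace.isOpen_generateFrom_of_mem ⟨0, j 0, Or.inl rfl⟩
  · refine tp_ext (fun t => ?_) (tail_shift_iterate p x)
    rw [vertex_shift_iterate, hxv, hxv, Nat.add_mod_right]

/-- Core argument: under condition (L), no nonempty open set inside the common
domain can have `T^m = T^n` for `m < n`. -/
lemma aux_core (hvert : ∀ i : I, ∃ j, (i, j) ∈ A)
    (hL : ∀ (p : ℕ) (j : ℕ → I), 0 < p → (∀ k < p, (j k, j (k + 1)) ∈ A) → j p = j 0 →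
        ∃ k < p, ∃ b : I, (j k, b) ∈ A ∧ b ≠ j (k + 1))
    (m n : ℕ) (hmn : m < n) (O : Set (TP A (JA A))) (hO : IsOpen O)
    (x : TP A (JA A)) (hxO : x ∈ O) (hdom : ∀ y ∈ O, LenGe y n)
    (heq : ∀ y ∈ O, shift^[m] y = shift^[n] y) : False := by
  classical
  set p := n - m with hpdef
  have hp : 0 < p := by omega
  have hper : ∀ y ∈ O, ∀ t, y.vertex (m + t) = y.vertex (m + t + p) := by
    intro y hy t
    have h := congrArg (fun z : TP A (JA A) => z.vertex t) (heq y hy)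
    simp only [vertex_shift_iterate] at h
    rw [show t + m = m + t by omega, show t + n = m + t + p by omega] at h
    exact h
  have hxinf : ∀ t, x.vertex t ≠ none := by
    intro t
    induction t using Nat.strong_induction_on with
    | _ t ih =>
      rcases Nat.lt_or_ge t n with h | h
      · exact hdom x hxO t h
      · obtain ⟨s, rfl⟩ : ∃ s, t = m + s + p := ⟨t - n, by omega⟩
        rw [← hper x hxO s]
        exact ih (m + s) (by omega)
  have hex : ∀ t, ∃ i, x.vertex t = some i := by
    intro t
    cases h : x.vertex t with
    | none => exact absurd h (hxinf t)
    | some i => exact ⟨i, rfl⟩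
  choose xv hxv using hex
  have hxvper : ∀ t, xv (m + t) = xv (m + t + p) := by
    intro t
    have h := hper x hxO t
    rw [hxv, hxv] at h
    exact Option.some.inj h
  have hxvper' : ∀ r t, xv (m + t + r * p) = xv (m + t) := by
    intro r
    induction r with
    | zero => simp
    | succ r ih =>
      intro t
      rw [show m + t + (r + 1) * p = m + (t + r * p) + p by ring, ← hxvper (t + r * p),
        ← Nat.add_assoc]
      exact ih t
  obtain ⟨k, hk, b, hbA, hbne⟩ := hL p (fun k => xv (m + k)) hp
    (fun k _ => x.2.2.1 (m + k) (xv (m + k)) (xv (m + (k + 1))) (hxv (m + k)) (hxv (m + (k + 1))))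
    (by simpa using (hxvper 0).symm)
  obtain ⟨N, hN⟩ := open_local hO hxO hxinf
  set r := N + 1 with hrdef
  set q := m + k + r * p with hqdef
  have hrp : r ≤ r * p := Nat.le_mul_of_pos_right _ hp
  have hNq : N < q := by omega
  let c := pathext hvert b
  have hcedge : ∀ t, (c t, c (t + 1)) ∈ A := pathext_spec hvert b
  set w : ℕ → Option I := fun s => if s ≤ q then x.vertex s else some (c (s - (q + 1))) with hwdef
  have hw_le : ∀ s, s ≤ q → w s = x.vertex s := fun s hs => if_pos hs
  have hw_gt : ∀ s, q < s → w s = some (c (s - (q + 1))) := fun s hs => if_neg (by omega)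
  have hwinf : ∀ s, w s ≠ none := by
    intro s
    rcases le_or_gt s q with h | h
    · rw [hw_le s h]; exact hxinf s
    · rw [hw_gt s h]; simp
  have hwTP : IsTP A (JA A) (w, (∅ : Set I)) := by
    refine ⟨fun s hs => absurd hs (hwinf s), ?_, fun h => (hwinf h.choose h.choose_spec).elim,
      fun _ => rfl⟩
    intro s a b' ha hb'
    rcases lt_trichotomy s q with h | h | h
    · rw [show (w, (∅ : Set I)).1 s = w s from rfl, hw_le s h.le] at ha
      rw [show (w, (∅ : Set I)).1 (s + 1) = w (s + 1) from rfl, hw_le (s + 1) (by omega)] at hb'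
      exact x.2.2.1 s a b' ha hb'
    · have ha' : x.vertex q = some a := by rw [← hw_le q le_rfl, ← h]; exact ha
      have hb'' : w (q + 1) = some b' := h ▸ hb'
      rw [hw_gt (q + 1) (by omega), Nat.sub_self] at hb''
      obtain rfl : a = xv q := by rw [hxv] at ha'; exact (Option.some.inj ha').symm
      obtain rfl : b' = b := (Option.some.inj hb'').symm
      have hq' : xv q = xv (m + k) := hxvper' r k
      rw [hq']
      exact hbA
    · rw [show (w, (∅ : Set I)).1 s = w s from rfl, hw_gt s h] at ha
      rw [show (w, (∅ : Set I)).1 (s + 1) = w (s + 1) from rfl, hw_gt (s + 1) (by omega)] at hb'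
      obtain rfl : a = c (s - (q + 1)) := (Option.some.inj ha).symm
      obtain rfl : b' = c (s + 1 - (q + 1)) := (Option.some.inj hb').symm
      rw [show s + 1 - (q + 1) = (s - (q + 1)) + 1 by omega]
      exact hcedge _
  set y : TP A (JA A) := ⟨(w, ∅), hwTP⟩ with hydef
  have hyv : ∀ s, y.vertex s = w s := fun _ => rfl
  have hyO : y ∈ O := hN y (fun s => hwinf s)
    (fun s hs => by rw [hyv, hw_le s (by omega)])
  have hyper := hper y hyO (k + N * p + 1)
  have hrpe : r * p = N * p + p := by rw [hrdef]; ring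
  have e1 : m + (k + N * p + 1) ≤ q := by omega
  have e2 : m + (k + N * p + 1) + p = q + 1 := by omega
  rw [e2] at hyper
  have hL1 : y.vertex (m + (k + N * p + 1)) = some (xv (m + (k + 1))) := by
    rw [hyv, hw_le _ e1, hxv]
    congr 1
    have h := hxvper' N (k + 1)
    rw [show m + (k + 1) + N * p = m + (k + N * p + 1) by ring] at h
    exact h
  have hR1 : y.vertex (q + 1) = some b := by
    rw [hyv, hw_gt (q + 1) (by omega), Nat.sub_self]
    rfl
  rw [hL1, hR1] at hyper
  exact hbne (Option.some.inj hyper).symm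

end TP

/-- Let `I` be a countable set and `A ⊆ I × I` such that every
vertex has an outgoing edge.  For the Markov shift `(X_A, T_A) = (X_{A,𝒥_A}, T_{A,𝒥_A})`
the following are equivalent:
(i) `(X_A, T_A)` is essentially free (for all `m ≠ n` there is no nonempty open set,
contained in the domains of `T_A^m` and `T_A^n`, on which `T_A^m` and `T_A^n` agree);
(ii) condition (L): every loop has at least one outgoing edge;
(iii) `(X_A, T_A)` has no isolated periodic point. -/
theorem essFree_iff_condL_iff_no_isolated_periodic
    {I : Type*} [Countable I] (A : Set (I × I))
    (hvert : ∀ i : I, ∃ j, (i, j) ∈ A) :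
    ((∀ m n : ℕ, m ≠ n → ∀ O : Set (TP A (JA A)), IsOpen O → O.Nonempty →
        (∀ x ∈ O, TP.LenGe x m ∧ TP.LenGe x n) →
        ¬ ∀ x ∈ O, TP.shift^[m] x = TP.shift^[n] x) ↔
      (∀ (p : ℕ) (j : ℕ → I), 0 < p → (∀ k < p, (j k, j (k + 1)) ∈ A) → j p = j 0 →
        ∃ k < p, ∃ b : I, (j k, b) ∈ A ∧ b ≠ j (k + 1))) ∧
    ((∀ (p : ℕ) (j : ℕ → I), 0 < p → (∀ k < p, (j k, j (k + 1)) ∈ A) → j p = j 0 →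
        ∃ k < p, ∃ b : I, (j k, b) ∈ A ∧ b ≠ j (k + 1)) ↔
      (∀ x : TP A (JA A),
        (∃ m n : ℕ, m < n ∧ TP.LenGe x n ∧ TP.shift^[m] x = TP.shift^[n] x) →
        ¬ IsOpen ({x} : Set (TP A (JA A))))) := by
  classical
  constructor
  · constructor
    · -- (i) → (ii)
      intro hI
      by_contra hL
      push_neg at hL
      obtain ⟨p, j, hp, hpath, hloop, hnout⟩ := hL
      obtain ⟨x, hopen, hxv, hshift⟩ := TP.loop_point p j hp hpath hloop hnout
      refine hI 0 p (by omega) {x} hopen ⟨x, rfl⟩ ?_ ?_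
      · intro y hy
        rw [Set.mem_singleton_iff] at hy
        subst hy
        exact ⟨fun k hk => (Nat.not_lt_zero k hk).elim,
          fun k _ => by rw [hxv]; simp⟩
      · intro y hy
        rw [Set.mem_singleton_iff] at hy
        subst hy
        simp only [Function.iterate_zero, id]
        exact hshift.symm
    · -- (ii) → (i)
      intro hL m n hmn O hO hne hdom hcontra
      obtain ⟨x, hxO⟩ := hne
      rcases Nat.lt_or_ge m n with h | h
      · exact TP.aux_core hvert hL m n h O hO x hxO (fun y hy => (hdom y hy).2) hcontra
      · have h' : n < m := by omega
        exact TP.aux_core hvert hL n m h' O hO x hxO (fun y hy => (hdom y hy).1)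
          (fun y hy => (hcontra y hy).symm)
  · constructor
    · -- (ii) → (iii)
      intro hL x hperiod hopen
      obtain ⟨m, n, hmn, hlen, heqx⟩ := hperiod
      refine TP.aux_core hvert hL m n hmn {x} hopen x rfl ?_ ?_
      · intro y hy
        rw [Set.mem_singleton_iff] at hy
        subst hy
        exact hlen
      · intro y hy
        rw [Set.mem_singleton_iff] at hy
        subst hy
        exact heqx
    · -- (iii) → (ii)
      intro hIII
      by_contra hL
      push_neg at hL
      obtain ⟨p, j, hp, hpath, hloop, hnout⟩ := hL
      obtain ⟨x, hopen, hxv, hshift⟩ := TP.loop_point p j hp hpath hloop hnout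
      refine hIII x ⟨0, p, hp, fun k _ => by rw [hxv]; simp, ?_⟩ hopen
      simp only [Function.iterate_zero, id]
      exact hshift.symm
end

section
/- Let I be a countable set and A ⊆ I × I such that every vertex has an outgoing edge (for every i ∈ I there is j ∈ I with (i,j) ∈ A). A point x ∈ X_A is periodic for T_A if and only if x is an infinite path which, after some time, repeats indefinitely the same loop, i.e. x = (i_0, …, i_{m−1}, α, α, α, …) for some m ∈ ℕ and some loop α = (j_0, …, j_p = j_0); moreover such a periodic point is an isolated point of X_A if and only if the loop α has no outgoing edge. -/
section Aux

variable {I : Type*} {A : Set (I × I)} {𝒥 : Set (Set I)}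

lemma TP.iter_vertex (x : TP A 𝒥) (m j : ℕ) :
    (TP.shift^[m] x).vertex j = x.vertex (j + m) := by
  induction m generalizing x with
  | zero => rfl
  | succ m ih =>
    rw [Function.iterate_succ_apply, ih]
    show x.vertex (j + m + 1) = x.vertex (j + (m + 1))
    rw [Nat.add_assoc]

lemma TP.iter_tail (x : TP A 𝒥) (m : ℕ) : (TP.shift^[m] x).1.2 = x.1.2 := by
  induction m generalizing x with
  | zero => rfl
  | succ m ih => rw [Function.iterate_succ_apply, ih]; rfl

lemma TP.per_mul (x : TP A 𝒥) {m p : ℕ}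
    (hper : ∀ n, m ≤ n → x.vertex (n + p) = x.vertex n) :
    ∀ q n, m ≤ n → x.vertex (n + q * p) = x.vertex n := by
  intro q
  induction q with
  | zero => simp
  | succ q ih =>
    intro n hn
    have h : n + (q + 1) * p = (n + q * p) + p := by ring
    rw [h, hper _ (le_trans hn (Nat.le_add_right _ _)), ih n hn]

end Aux

lemma part1 {I : Type*} (A : Set (I × I)) (x : TP A (JA A)) :
    (∃ m n : ℕ, m < n ∧ TP.LenGe x n ∧ TP.shift^[m] x = TP.shift^[n] x) ↔
    (∃ m p : ℕ, 0 < p ∧ (∀ k : ℕ, x.vertex k ≠ none) ∧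
      ∀ n : ℕ, m ≤ n → x.vertex (n + p) = x.vertex n) := by
  constructor
  · rintro ⟨m, n, hmn, hlen, heq⟩
    have hvx : ∀ j, x.vertex (j + m) = x.vertex (j + n) := fun j => by
      rw [← TP.iter_vertex, ← TP.iter_vertex, heq]
    set p := n - m with hp'
    have hp : 0 < p := by omega
    have hper : ∀ k, m ≤ k → x.vertex (k + p) = x.vertex k := by
      intro k hk
      have h := hvx (k - m)
      rw [show k - m + m = k from by omega, show k - m + n = k + p from by omega] at h
      exact h.symm
    have hinf : ∀ k, x.vertex k ≠ none := by
      intro k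
      induction k using Nat.strong_induction_on with
      | _ k ih =>
        by_cases hk : k < n
        · exact hlen k hk
        · rw [show k = (k - p) + p from by omega, hper _ (by omega)]
          exact ih (k - p) (by omega)
    exact ⟨m, p, hp, hinf, hper⟩
  · rintro ⟨m, p, hp, hinf, hper⟩
    refine ⟨m, m + p, by omega, fun k _ => hinf k, ?_⟩
    apply Subtype.ext
    apply Prod.ext
    · funext j
      have h1 := TP.iter_vertex x m j
      have h2 := TP.iter_vertex x (m + p) j
      rw [show j + (m + p) = (j + m) + p from by omega,
        hper (j + m) (by omega)] at h2
      exact (h1.trans h2.symm : _)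
    · rw [TP.iter_tail, TP.iter_tail]

lemma part2a {I : Type*} (A : Set (I × I)) (hvert : ∀ i : I, ∃ j, (i, j) ∈ A)
    (x : TP A (JA A)) (m p : ℕ) (hp : 0 < p) (hinf : ∀ k : ℕ, x.vertex k ≠ none)
    (hper : ∀ n : ℕ, m ≤ n → x.vertex (n + p) = x.vertex n)
    (hno : ∀ k, m ≤ k → k < m + p → ∀ a b : I,
      x.vertex k = some a → (a, b) ∈ A → x.vertex (k + 1) = some b) :
    IsOpen ({x} : Set (TP A (JA A))) := by
  have hclaim : ({x} : Set (TP A (JA A))) =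
      ⋂ k ∈ Finset.range (m + 1), {y : TP A (JA A) | y.vertex k = x.vertex k} := by
    ext y
    simp only [Set.mem_singleton_iff, Set.mem_iInter]
    constructor
    · rintro rfl; intros; rfl
    · intro hy
      have hy' : ∀ k, k ≤ m → y.vertex k = x.vertex k := fun k hk =>
        hy k (Finset.mem_range.mpr (by omega))
      have key : ∀ j, y.vertex (m + j) = x.vertex (m + j) := by
        intro j
        induction j with
        | zero => exact hy' m le_rfl
        | succ j ih =>
          set n := m + j with hn
          obtain ⟨c, hc⟩ := Option.ne_none_iff_exists'.mp (hinf n)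
          have hyc : y.vertex n = some c := by rw [ih, hc]
          set k' := m + (n - m) % p with hk'
          have hk'lt : k' < m + p := by
            have := Nat.mod_lt (n - m) hp; omega
          have hk'ge : m ≤ k' := Nat.le_add_right _ _
          have hred : k' + ((n - m) / p) * p = n := by
            have := Nat.mod_add_div' (n - m) p; omega
          have hxk' : x.vertex k' = some c := by
            have h := TP.per_mul x hper ((n - m) / p) k' hk'ge
            rw [hred] at h
            rw [← h, hc]
          have hxk1 : x.vertex (k' + 1) = x.vertex (n + 1) := by
            have h := TP.per_mul x hper ((n - m) / p) (k' + 1) (by omega)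
            rw [show k' + 1 + (n - m) / p * p = n + 1 from by omega] at h
            exact h.symm
          show y.vertex (n + 1) = x.vertex (n + 1)
          cases hyn1 : y.vertex (n + 1) with
          | none =>
            exfalso
            obtain ⟨h1, h2, h3, h4⟩ := y.2
            have h3' := h3 ⟨n + 1, hyn1⟩
            have hcJ : c ∈ y.1.2 := h3'.2 n c hyc hyn1
            have hJ : y.1.2 ∈ JA A := h3'.1
            have hInf := hJ {c} ∅ (by simpa using hcJ) (by simp)
            apply hInf
            apply Set.Subsingleton.finite
            intro i1 hi1 i2 hi2
            have e1 : (c, i1) ∈ A := hi1.1 c (Finset.mem_singleton_self c)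
            have e2 : (c, i2) ∈ A := hi2.1 c (Finset.mem_singleton_self c)
            have w1 := hno k' hk'ge hk'lt c i1 hxk' e1
            have w2 := hno k' hk'ge hk'lt c i2 hxk' e2
            exact Option.some.inj (w1.symm.trans w2)
          | some d =>
            have hedge : (c, d) ∈ A := y.2.2.1 n c d hyc hyn1
            rw [← hxk1, hno k' hk'ge hk'lt c d hxk' hedge]
      have hall : ∀ n, y.vertex n = x.vertex n := by
        intro n
        rcases le_or_gt n m with h | h
        · exact hy' n h
        · have := key (n - m)
          rwa [show m + (n - m) = n from by omega] at this
      have hyinf : ∀ n, y.1.1 n ≠ none := fun n => by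
        rw [show y.1.1 n = y.vertex n from rfl, hall n]; exact hinf n
      have hytail : y.1.2 = ∅ := y.2.2.2.2 hyinf
      have hxtail : x.1.2 = ∅ := x.2.2.2.2 hinf
      exact Subtype.ext (Prod.ext (funext hall) (hytail.trans hxtail.symm))
  rw [hclaim]
  apply isOpen_biInter_finset
  intro k _
  obtain ⟨i, hi⟩ := Option.ne_none_iff_exists'.mp (hinf k)
  have h : {y : TP A (JA A) | y.vertex k = x.vertex k} =
      {y : TP A (JA A) | y.vertex k = some i} := by rw [hi]
  rw [h]
  exact TopologicalSpace.GenerateOpen.basic _ ⟨k, i, Or.inl rfl⟩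

lemma gens_bound {I : Type*} (A : Set (I × I)) (x : TP A (JA A))
    (hinf : ∀ k : ℕ, x.vertex k ≠ none)
    (s : Set (TP A (JA A))) (hs : s ∈ TP.gens A (JA A)) (hxs : x ∈ s) :
    ∃ N, ∀ y : TP A (JA A), (∀ k, y.vertex k ≠ none) →
      (∀ k, k ≤ N → y.vertex k = x.vertex k) → y ∈ s := by
  obtain ⟨n, i, h | h | h | h⟩ := hs <;> subst h <;> refine ⟨n, fun y hy1 hy2 => ?_⟩
  · show y.vertex n = some i
    rw [hy2 n le_rfl]; exact hxs
  · show ¬(y.vertex n = some i)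
    rw [hy2 n le_rfl]; exact hxs
  · refine ⟨fun k _ => hy1 k, ?_⟩
    rcases hxs.2 with ⟨c, hc, hic⟩ | ⟨hn, -⟩
    · exact Or.inl ⟨c, (hy2 n le_rfl).trans hc, hic⟩
    · exact absurd hn (hinf n)
  · have hix : i ∉ x.lamAt n := fun h => hxs ⟨fun k _ => hinf k, h⟩
    rintro ⟨-, hiy⟩
    rcases hiy with ⟨c, hc, hic⟩ | ⟨hn, -⟩
    · exact hix (Or.inl ⟨c, (hy2 n le_rfl).symm.trans hc, hic⟩)
    · exact absurd hn (hy1 n)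

lemma part2b {I : Type*} (A : Set (I × I)) (hvert : ∀ i : I, ∃ j, (i, j) ∈ A)
    (x : TP A (JA A)) (m p : ℕ) (hp : 0 < p) (hinf : ∀ k : ℕ, x.vertex k ≠ none)
    (hper : ∀ n : ℕ, m ≤ n → x.vertex (n + p) = x.vertex n)
    (k : ℕ) (hkm : m ≤ k) (hkp : k < m + p) (a b : I)
    (hka : x.vertex k = some a) (hab : (a, b) ∈ A) (hkb : x.vertex (k + 1) ≠ some b) :
    ¬ IsOpen ({x} : Set (TP A (JA A))) := by
  intro hopen
  have hbasis := TopologicalSpace.isTopologicalBasis_of_subbasis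
    (rfl : (inferInstance : TopologicalSpace (TP A (JA A))) =
      TopologicalSpace.generateFrom (TP.gens A (JA A)))
  obtain ⟨v, hv, hxv, hsub⟩ := hbasis.isOpen_iff.mp hopen x rfl
  obtain ⟨f, ⟨hfin, hfg⟩, rfl⟩ := hv
  have hPs : ∀ s ∈ f, ∃ N, ∀ y : TP A (JA A), (∀ k, y.vertex k ≠ none) →
      (∀ k, k ≤ N → y.vertex k = x.vertex k) → y ∈ s := fun s hs =>
    gens_bound A x hinf s (hfg hs) (hxv s hs)
  choose! N hN using hPs
  set M := hfin.toFinset.sup N with hM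
  have hMs : ∀ s ∈ f, ∀ y : TP A (JA A), (∀ k, y.vertex k ≠ none) →
      (∀ k, k ≤ M → y.vertex k = x.vertex k) → y ∈ s := by
    intro s hs y hy1 hy2
    exact hN s hs y hy1 fun k hk =>
      hy2 k (hk.trans (Finset.le_sup (hfin.mem_toFinset.mpr hs)))
  choose g hg using hvert
  set K := k + (M + 1) * p with hK
  have hMK : M < K := by
    have : (M + 1) * 1 ≤ (M + 1) * p := Nat.mul_le_mul_left _ hp
    omega
  have hxK : x.vertex K = some a := by
    have h := TP.per_mul x hper (M + 1) k hkm
    rw [← hK] at h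
    rw [h, hka]
  have hxK1 : x.vertex (K + 1) = x.vertex (k + 1) := by
    have h := TP.per_mul x hper (M + 1) (k + 1) (by omega)
    rwa [show k + 1 + (M + 1) * p = K + 1 from by omega] at h
  set yv : ℕ → Option I := fun n => if n ≤ K then x.1.1 n else some (g^[n - (K + 1)] b)
    with hyv
  have hyinf : ∀ n, yv n ≠ none := by
    intro n hn
    simp only [hyv] at hn
    by_cases h : n ≤ K
    · rw [if_pos h] at hn; exact hinf n hn
    · rw [if_neg h] at hn; exact Option.some_ne_none _ hn
  have hyIsTP : IsTP A (JA A) (yv, ∅) := by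
    refine ⟨fun n hn => absurd hn (hyinf n), ?_, fun hex => absurd hex.choose_spec
      (hyinf _), fun _ => rfl⟩
    intro n i j hni hnj
    by_cases h1 : n + 1 ≤ K
    · have h0 : n ≤ K := by omega
      rw [hyv] at hni hnj
      simp only [if_pos h0] at hni
      simp only [if_pos h1] at hnj
      exact x.2.2.1 n i j hni hnj
    · by_cases h0 : n ≤ K
      · have hnK : n = K := by omega
        subst hnK
        rw [hyv] at hni hnj
        simp only [if_pos h0, if_neg h1] at hni hnj
        rw [show K + 1 - (K + 1) = 0 from by omega] at hnj
        have hia : i = a := Option.some.inj ((hni.symm.trans hxK : some i = some a))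
        have hjb : j = b := (Option.some.inj hnj).symm
        rw [hia, hjb]; exact hab
      · rw [hyv] at hni hnj
        simp only [if_neg h0, if_neg (show ¬ n + 1 ≤ K by omega)] at hni hnj
        rw [show n + 1 - (K + 1) = (n - (K + 1)) + 1 from by omega,
          Function.iterate_succ_apply'] at hnj
        obtain rfl : g^[n - (K + 1)] b = i := Option.some.inj hni
        obtain rfl : g (g^[n - (K + 1)] b) = j := Option.some.inj hnj
        exact hg _
  set y : TP A (JA A) := ⟨(yv, ∅), hyIsTP⟩ with hy
  have hyagree : ∀ j, j ≤ M → y.vertex j = x.vertex j := by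
    intro j hj
    show yv j = x.1.1 j
    rw [hyv]
    simp only [if_pos (show j ≤ K by omega)]
  have hy_in : y ∈ ⋂₀ f := Set.mem_sInter.mpr fun s hs => hMs s hs y hyinf hyagree
  have hyx : y = x := hsub hy_in
  have h1 : y.vertex (K + 1) = some b := by
    show yv (K + 1) = some b
    rw [hyv]
    simp only [if_neg (show ¬ K + 1 ≤ K by omega)]
    rw [show K + 1 - (K + 1) = 0 from by omega]
    rfl
  rw [hyx] at h1
  rw [hxK1] at h1
  exact hkb h1

/-- Let `I` be a countable set and `A ⊆ I × I` such that every
vertex has an outgoing edge.  A point `x ∈ X_A` is periodic for `T_A` if and only if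
`x` is an infinite path which, after some time `m`, repeats indefinitely the same
loop of some length `p ≥ 1` (i.e. `x` is infinite and `x (n + p) = x n` for all
`n ≥ m`); moreover such a periodic point is an isolated point of `X_A` if and only if
the repeated loop `(x_m, …, x_{m+p} = x_m)` has no outgoing edge. -/
theorem periodic_iff_eventually_loop_and_isolated_iff_no_exit
    {I : Type*} [Countable I] (A : Set (I × I))
    (hvert : ∀ i : I, ∃ j, (i, j) ∈ A) :
    (∀ x : TP A (JA A),
      (∃ m n : ℕ, m < n ∧ TP.LenGe x n ∧ TP.shift^[m] x = TP.shift^[n] x) ↔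
      (∃ m p : ℕ, 0 < p ∧ (∀ k : ℕ, x.vertex k ≠ none) ∧
        ∀ n : ℕ, m ≤ n → x.vertex (n + p) = x.vertex n)) ∧
    (∀ (x : TP A (JA A)) (m p : ℕ), 0 < p → (∀ k : ℕ, x.vertex k ≠ none) →
      (∀ n : ℕ, m ≤ n → x.vertex (n + p) = x.vertex n) →
      (IsOpen ({x} : Set (TP A (JA A))) ↔
        ¬ ∃ k : ℕ, m ≤ k ∧ k < m + p ∧ ∃ a b : I,
          x.vertex k = some a ∧ (a, b) ∈ A ∧ x.vertex (k + 1) ≠ some b)) := by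
  refine ⟨fun x => part1 A x, fun x m p hp hinf hper => ?_⟩
  constructor
  · intro hopen
    by_contra hex
    obtain ⟨k, hkm, hkp, a, b, hka, hab, hkb⟩ := hex
    exact part2b A hvert x m p hp hinf hper k hkm hkp a b hka hab hkb hopen
  · intro hno
    push_neg at hno
    exact part2a A hvert x m p hp hinf hper hno
end

section
/- Let I be a countable set and A ⊆ I × I such that every vertex has an outgoing edge. If a loop (j_0, …, j_n = j_0) has an outgoing edge, then the cylinder set Z(j_0, …, j_n) is a proper subset of T_A^n(Z(j_0, …, j_n)). -/
section Aux

variable {I : Type*} {A : Set (I × I)} {𝒥 : Set (Set I)}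

lemma my_shift_iter_coe (n : ℕ) (x : TP A 𝒥) :
    (TP.shift^[n] x).1 = (fun m => x.1.1 (m + n), x.1.2) := by
  induction n generalizing x with
  | zero => rfl
  | succ n ih =>
    rw [Function.iterate_succ_apply, ih (TP.shift x)]
    rfl

lemma my_shift_iter_vertex (n : ℕ) (x : TP A 𝒥) (m : ℕ) :
    (TP.shift^[n] x).vertex m = x.vertex (m + n) := by
  show (TP.shift^[n] x).1.1 m = x.1.1 (m + n)
  rw [my_shift_iter_coe]

lemma my_succ_mod (m n : ℕ) : (m + 1) % n = (m % n + 1) % n := by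
  rw [Nat.add_mod, Nat.add_mod (m % n) 1, Nat.mod_mod_of_dvd _ dvd_rfl]

end Aux

/-- Let `I` be a countable set and `A ⊆ I × I` such that every
vertex has an outgoing edge.  If a loop `(j 0, …, j n = j 0)` (`n ≥ 1`) has an
outgoing edge, then the cylinder set `Z(j 0, …, j n)` is a *proper* subset of its
image `T_A^n (Z(j 0, …, j n))`. -/
theorem cylinder_ssubset_shift_image_of_exit
    {I : Type*} [Countable I] (A : Set (I × I))
    (hvert : ∀ i : I, ∃ j, (i, j) ∈ A)
    (n : ℕ) (j : ℕ → I) (hn : 0 < n)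
    (hpath : ∀ k < n, (j k, j (k + 1)) ∈ A) (hloop : j n = j 0)
    (hexit : ∃ k < n, ∃ b : I, (j k, b) ∈ A ∧ b ≠ j (k + 1)) :
    {x : TP A (JA A) | ∀ k ≤ n, x.vertex k = some (j k)} ⊂
      TP.shift^[n] '' {x : TP A (JA A) | ∀ k ≤ n, x.vertex k = some (j k)} := by
  have key : ∀ m : ℕ, (j (m % n), j ((m + 1) % n)) ∈ A := by
    intro m
    have hmn : m % n < n := Nat.mod_lt _ hn
    rw [my_succ_mod]
    rcases Nat.lt_or_ge (m % n + 1) n with h | h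
    · rw [Nat.mod_eq_of_lt h]
      exact hpath _ hmn
    · have he : m % n + 1 = n := by omega
      rw [he, Nat.mod_self]
      have := hpath (m % n) hmn
      rwa [he, hloop] at this
  -- Z is contained in its image
  have hsub : {x : TP A (JA A) | ∀ k ≤ n, x.vertex k = some (j k)} ⊆
      TP.shift^[n] '' {x : TP A (JA A) | ∀ k ≤ n, x.vertex k = some (j k)} := by
    intro x hx
    obtain ⟨h1, h2, h3, h4⟩ := x.2
    have hx0 : x.1.1 0 = some (j 0) := hx 0 (Nat.zero_le n)
    refine ⟨⟨(fun m => if m < n then some (j m) else x.1.1 (m - n), x.1.2),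
      ?_, ?_, ?_, ?_⟩, ?_, ?_⟩
    · intro m hm
      simp only at hm ⊢
      rcases Nat.lt_or_ge m n with h | h
      · rw [if_pos h] at hm; exact absurd hm (by simp)
      · rw [if_neg (by omega : ¬ m < n)] at hm
        rw [if_neg (by omega : ¬ m + 1 < n)]
        have he : m + 1 - n = (m - n) + 1 := by omega
        rw [he]
        exact h1 _ hm
    · intro m a c ha hc
      simp only at ha hc
      rcases Nat.lt_or_ge (m + 1) n with h | h
      · rw [if_pos (by omega : m < n), Option.some_inj] at ha
        rw [if_pos h, Option.some_inj] at hc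
        subst ha; subst hc
        exact hpath m (by omega)
      · rcases Nat.lt_or_ge m n with h' | h'
        · -- m + 1 = n
          rw [if_pos h', Option.some_inj] at ha
          rw [if_neg (by omega : ¬ m + 1 < n),
            (by omega : m + 1 - n = 0), hx0, Option.some_inj] at hc
          subst ha; subst hc
          have := hpath m h'
          rwa [(by omega : m + 1 = n), hloop] at this
        · rw [if_neg (by omega : ¬ m < n)] at ha
          rw [if_neg (by omega : ¬ m + 1 < n),
            (by omega : m + 1 - n = (m - n) + 1)] at hc
          exact h2 _ _ _ ha hc
    · rintro ⟨m, hm⟩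
      simp only at hm
      rcases Nat.lt_or_ge m n with h | h
      · rw [if_pos h] at hm; exact absurd hm (by simp)
      · rw [if_neg (by omega : ¬ m < n)] at hm
        have hx3 := h3 ⟨m - n, hm⟩
        refine ⟨hx3.1, ?_⟩
        intro m' i hi hni
        simp only at hi hni
        rcases Nat.lt_or_ge (m' + 1) n with h' | h'
        · rw [if_pos h'] at hni; exact absurd hni (by simp)
        · rcases Nat.lt_or_ge m' n with h'' | h''
          · rw [if_neg (by omega : ¬ m' + 1 < n),
              (by omega : m' + 1 - n = 0), hx0] at hni
            exact absurd hni (by simp)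
          · rw [if_neg (by omega : ¬ m' < n)] at hi
            rw [if_neg (by omega : ¬ m' + 1 < n),
              (by omega : m' + 1 - n = (m' - n) + 1)] at hni
            exact hx3.2 _ _ hi hni
    · intro hall
      apply h4
      intro m
      have := hall (m + n)
      simp only at this
      rw [if_neg (by omega : ¬ m + n < n), (by omega : m + n - n = m)] at this
      exact this
    · intro k hk
      show (if k < n then some (j k) else x.1.1 (k - n)) = some (j k)
      rcases Nat.lt_or_ge k n with h | h
      · rw [if_pos h]
      · have he : k = n := by omega
        subst he
        rw [if_neg (by omega), Nat.sub_self, hx0, hloop]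
    · apply Subtype.ext
      refine (my_shift_iter_coe n _).trans ?_
      refine Prod.ext ?_ rfl
      funext m
      simp only
      rw [if_neg (by omega : ¬ m + n < n), (by omega : m + n - n = m)]
  rw [Set.ssubset_iff_of_subset hsub]
  -- construct a path following the loop, then exiting
  obtain ⟨k, hk, b, hb, hbne⟩ := hexit
  choose nxt hnxt using hvert
  set f : ℕ → I := fun m => if m ≤ n + k then j (m % n) else nxt^[m - (n + k + 1)] b
    with hf
  have hedge : ∀ m : ℕ, (f m, f (m + 1)) ∈ A := by
    intro m
    rcases Nat.lt_or_ge (m + 1) (n + k + 1) with h | h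
    · have h1 : m ≤ n + k := by omega
      have h2 : m + 1 ≤ n + k := by omega
      simp only [hf, if_pos h1, if_pos h2]
      exact key m
    · rcases Nat.lt_or_ge m (n + k + 1) with h' | h'
      · have hm : m = n + k := by omega
        subst hm
        have hmod : (n + k) % n = k := by
          rw [Nat.add_mod_left, Nat.mod_eq_of_lt hk]
        simp only [hf, if_pos le_rfl, if_neg (by omega : ¬ n + k + 1 ≤ n + k), hmod,
          Nat.sub_self, Function.iterate_zero, id_eq]
        exact hb
      · have h1 : ¬ m ≤ n + k := by omega
        have h2 : ¬ m + 1 ≤ n + k := by omega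
        simp only [hf, if_neg h1, if_neg h2]
        rw [(by omega : m + 1 - (n + k + 1) = (m - (n + k + 1)) + 1),
          Function.iterate_succ_apply']
        exact hnxt _
  refine ⟨TP.shift^[n] ⟨(fun m => some (f m), ∅), ?_, ?_, ?_, ?_⟩, ⟨_, ?_, rfl⟩, ?_⟩
  · intro m hm; exact absurd hm (by simp)
  · intro m a c ha hc
    simp only [Option.some_inj] at ha hc
    subst ha; subst hc
    exact hedge m
  · rintro ⟨m, hm⟩; exact absurd hm (by simp)
  · intro _; rfl
  · intro k' hk'
    show some (f k') = some (j k')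
    simp only [hf, if_pos (by omega : k' ≤ n + k), Option.some_inj]
    rcases Nat.lt_or_ge k' n with h | h
    · rw [Nat.mod_eq_of_lt h]
    · rw [(by omega : k' = n), Nat.mod_self, hloop]
  · intro hmem
    have hmem2 := hmem (k + 1) (by omega)
    replace hmem2 := (my_shift_iter_vertex n _ (k + 1)).symm.trans hmem2
    have hv : f (k + 1 + n) = b := by
      simp only [hf, if_neg (by omega : ¬ k + 1 + n ≤ n + k)]
      rw [(by omega : k + 1 + n - (n + k + 1) = 0), Function.iterate_zero, id_eq]
    have h2 : some (f (k + 1 + n)) = some (j (k + 1)) := hmem2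
    rw [hv] at h2
    exact hbne (Option.some_inj.mp h2)
end
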